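/- Let x be conditionally Gaussian given y: conditionally on a standard real Gaussian y, x is Gaussian with mean 0 and variance y². Then E[exp(λ y²)] < ∞ if and only if λ < 1/2, while E[exp(γ x²)] = ∞ for every γ > 0. -/
import Mathlib

open MeasureTheory ProbabilityTheory

lemma gauss_sq_lintegral (l : ℝ) :
    ∫⁻ x, ENNReal.ofReal (Real.exp (l * x ^ 2)) ∂(gaussianReal 0 1) < ⊤ ↔ l < 1 / 2 := by
  have hmeas : Measurable fun x : ℝ => ENNReal.ofReal (Real.exp (l * x ^ 2)) :=
    (Real.measurable_exp.comp (measurable_const.mul (measurable_id.pow_const 2))).ennreal_ofReal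
  rw [gaussianReal_of_var_ne_zero 0 one_ne_zero,
    lintegral_withDensity_eq_lintegral_mul _ (measurable_gaussianPDF 0 1) hmeas]
  have key : ∀ x : ℝ, (gaussianPDF 0 1 * fun x => ENNReal.ofReal (Real.exp (l * x ^ 2))) x
      = ENNReal.ofReal ((Real.sqrt (2 * Real.pi))⁻¹ * Real.exp ((l - 1/2) * x ^ 2)) := by
    intro x
    simp only [Pi.mul_apply, gaussianPDF, gaussianPDFReal, NNReal.coe_one, mul_one, sub_zero]
    rw [← ENNReal.ofReal_mul (by positivity), mul_assoc, ← Real.exp_add]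
    congr 2
    ring_nf
  simp_rw [key]
  constructor
  · intro h
    by_contra hl
    push_neg at hl
    have hle : ∀ x : ℝ, ENNReal.ofReal ((Real.sqrt (2 * Real.pi))⁻¹)
        ≤ ENNReal.ofReal ((Real.sqrt (2 * Real.pi))⁻¹ * Real.exp ((l - 1/2) * x ^ 2)) := by
      intro x
      apply ENNReal.ofReal_le_ofReal
      nlinarith [Real.one_le_exp (by nlinarith [sq_nonneg x] : (0:ℝ) ≤ (l - 1/2) * x ^ 2),
        Real.sqrt_pos.mpr (by positivity : (0:ℝ) < 2 * Real.pi),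
        inv_pos.mpr (Real.sqrt_pos.mpr (by positivity : (0:ℝ) < 2 * Real.pi))]
    have hc : (0:ℝ) < (Real.sqrt (2 * Real.pi))⁻¹ := by positivity
    have h2 : (⊤:ENNReal) ≤ ∫⁻ a : ℝ,
        ENNReal.ofReal ((Real.sqrt (2 * Real.pi))⁻¹ * Real.exp ((l - 1/2) * a ^ 2)) := by
      calc (⊤:ENNReal) = ENNReal.ofReal ((Real.sqrt (2 * Real.pi))⁻¹)
            * volume (Set.univ : Set ℝ) := by
            rw [Real.volume_univ, ENNReal.mul_top (ENNReal.ofReal_pos.mpr hc).ne']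
        _ = ∫⁻ _ : ℝ, ENNReal.ofReal ((Real.sqrt (2 * Real.pi))⁻¹) := (lintegral_const _).symm
        _ ≤ _ := lintegral_mono hle
    rw [top_le_iff.mp h2] at h
    exact absurd h (by simp)
  · intro hl
    have hb : (0:ℝ) < 1/2 - l := by linarith
    have hint : Integrable (fun x : ℝ =>
        (Real.sqrt (2 * Real.pi))⁻¹ * Real.exp ((l - 1/2) * x ^ 2)) := by
      have : Integrable (fun x : ℝ => Real.exp (-(1/2 - l) * x ^ 2)) :=
        integrable_exp_neg_mul_sq hb
      have h2 : Integrable (fun x : ℝ => Real.exp ((l - 1/2) * x ^ 2)) := by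
        convert this using 2 with x
        ring_nf
      exact h2.const_mul _
    exact hint.lintegral_lt_top

/-- let `y`, `g` be independent standard real Gaussians and `x = y·g`, so that
conditionally on `y`, `x` is centered Gaussian with variance `y²`.  Then
`E[exp(l·y²)] < ∞` iff `l < 1/2`, while `E[exp(γ·x²)] = ∞` for every `γ > 0`. -/
theorem conditionally_gaussian_exponential_moments
    {Ω : Type*} [MeasurableSpace Ω] (P : Measure Ω) [IsProbabilityMeasure P]
    (y g : Ω → ℝ) (hy : Measurable y) (hg : Measurable g)
    (hindep : IndepFun y g P)
    (hylaw : Measure.map y P = gaussianReal 0 1)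
    (hglaw : Measure.map g P = gaussianReal 0 1) :
    (∀ l : ℝ,
      (∫⁻ ω, ENNReal.ofReal (Real.exp (l * (y ω) ^ 2)) ∂P < ⊤ ↔ l < 1 / 2)) ∧
    (∀ γ : ℝ, 0 < γ →
      ∫⁻ ω, ENNReal.ofReal (Real.exp (γ * (y ω * g ω) ^ 2)) ∂P = ⊤) := by
  constructor
  · intro l
    have hmeas : Measurable fun x : ℝ => ENNReal.ofReal (Real.exp (l * x ^ 2)) :=
      (Real.measurable_exp.comp (measurable_const.mul (measurable_id.pow_const 2))).ennreal_ofReal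
    rw [← gauss_sq_lintegral l, ← hylaw, lintegral_map hmeas hy]
  · intro γ hγ
    -- F depends on y, G depends on g
    set F : ℝ → ENNReal := fun t => if 1 ≤ 2 * γ * t ^ 2 then 1 else 0 with hF
    set G : ℝ → ENNReal := fun t => ENNReal.ofReal (Real.exp ((1/2) * t ^ 2)) with hG
    have hSmeas : MeasurableSet {t : ℝ | 1 ≤ 2 * γ * t ^ 2} :=
      measurableSet_le measurable_const (measurable_const.mul (measurable_id.pow_const 2))
    have hFmeas : Measurable F := Measurable.ite hSmeas measurable_const measurable_const
    have hGmeas : Measurable G :=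
      (Real.measurable_exp.comp (measurable_const.mul (measurable_id.pow_const 2))).ennreal_ofReal
    have hbound : ∀ ω, F (y ω) * G (g ω)
        ≤ ENNReal.ofReal (Real.exp (γ * (y ω * g ω) ^ 2)) := by
      intro ω
      by_cases h : 1 ≤ 2 * γ * (y ω) ^ 2
      · have hF1 : F (y ω) = 1 := if_pos h
        rw [hF1, one_mul]
        apply ENNReal.ofReal_le_ofReal
        apply Real.exp_le_exp.mpr
        have := sq_nonneg (g ω)
        nlinarith [sq_nonneg (y ω * g ω), sq_nonneg (g ω)]
      · have hF0 : F (y ω) = 0 := if_neg h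
        simp [hF0]
    have hprod : ∫⁻ ω, F (y ω) * G (g ω) ∂P
        = (∫⁻ ω, F (y ω) ∂P) * ∫⁻ ω, G (g ω) ∂P := by
      exact lintegral_mul_eq_lintegral_mul_lintegral_of_indepFun
        (hFmeas.comp hy) (hGmeas.comp hg) (hindep.comp hFmeas hGmeas)
    have hGinf : ∫⁻ ω, G (g ω) ∂P = ⊤ := by
      have hmap := lintegral_map (μ := P) hGmeas hg
      rw [hglaw] at hmap
      by_contra h
      have hlt : ∫⁻ ω, G (g ω) ∂P < ⊤ := lt_top_iff_ne_top.mpr h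
      rw [← hmap] at hlt
      have := (gauss_sq_lintegral (1/2)).mp hlt
      linarith
    have hFpos : 0 < ∫⁻ ω, F (y ω) ∂P := by
      rw [← lintegral_map (hFmeas) hy, hylaw]
      have hind : ∫⁻ t, F t ∂(gaussianReal 0 1)
          = gaussianReal 0 1 {t : ℝ | 1 ≤ 2 * γ * t ^ 2} := by
        rw [← lintegral_indicator_one hSmeas]
        congr 1 with t
      rw [hind]
      rw [pos_iff_ne_zero]
      intro h0
      rw [gaussianReal_of_var_ne_zero 0 one_ne_zero,
        withDensity_apply_eq_zero (measurable_gaussianPDF 0 1)] at h0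
      have hset : {x : ℝ | gaussianPDF 0 1 x ≠ 0} ∩ {t : ℝ | 1 ≤ 2 * γ * t ^ 2}
          = {t : ℝ | 1 ≤ 2 * γ * t ^ 2} := by
        apply Set.inter_eq_self_of_subset_right
        intro t _
        exact (gaussianPDF_pos 0 one_ne_zero t).ne'
      rw [hset] at h0
      have hsub : Set.Ici (Real.sqrt (1 / (2 * γ))) ⊆ {t : ℝ | 1 ≤ 2 * γ * t ^ 2} := by
        intro t ht
        simp only [Set.mem_Ici] at ht
        simp only [Set.mem_setOf_eq]
        have h1 : Real.sqrt (1 / (2 * γ)) ^ 2 = 1 / (2 * γ) := Real.sq_sqrt (by positivity)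
        have h2 : Real.sqrt (1 / (2 * γ)) ^ 2 ≤ t ^ 2 := by
          apply sq_le_sq'
          · linarith [Real.sqrt_nonneg (1 / (2 * γ))]
          · exact ht
        rw [h1] at h2
        have hinv : 2 * γ * (1 / (2 * γ)) = 1 := by field_simp
        nlinarith [h2, hγ]
      have := measure_mono_null hsub h0
      simp [Real.volume_Ici] at this
    have hle : (⊤ : ENNReal) ≤ ∫⁻ ω, ENNReal.ofReal (Real.exp (γ * (y ω * g ω) ^ 2)) ∂P := by
      calc (⊤ : ENNReal) = (∫⁻ ω, F (y ω) ∂P) * ∫⁻ ω, G (g ω) ∂P := by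
            rw [hGinf, ENNReal.mul_top hFpos.ne']
        _ = ∫⁻ ω, F (y ω) * G (g ω) ∂P := hprod.symm
        _ ≤ _ := lintegral_mono hbound
    exact top_le_iff.mp hle
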